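/- Let H, W be positive integers, S = ZMod H × ZMod W, and let g : S → ℝ be a blur kernel (g ≥ 0 pointwise and ∑_{s∈S} g s = 1). For any a : S → ℝ and any natural number k, the variance of the k-fold iterated blur is monotonically nonincreasing in k: Var((blur g)^[k+1] a) ≤ Var((blur g)^[k] a). -/
import Mathlib

open Finset Real

/-- Circular blur of `a` by the kernel `g` on `ZMod H × ZMod W`. -/
noncomputable def segBlur {H W : ℕ} [NeZero H] [NeZero W]
    (g : ZMod H × ZMod W → ℝ) (a : ZMod H × ZMod W → ℝ) : ZMod H × ZMod W → ℝ :=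
  fun p => ∑ s : ZMod H × ZMod W, g s * a (p - s)

/-- Mean of `a` over `ZMod H × ZMod W`. -/
noncomputable def segMean {H W : ℕ} [NeZero H] [NeZero W]
    (a : ZMod H × ZMod W → ℝ) : ℝ :=
  (1 / ((H : ℝ) * (W : ℝ))) * ∑ p : ZMod H × ZMod W, a p

/-- Variance of `a` over `ZMod H × ZMod W`. -/
noncomputable def segVar {H W : ℕ} [NeZero H] [NeZero W]
    (a : ZMod H × ZMod W → ℝ) : ℝ :=
  (1 / ((H : ℝ) * (W : ℝ))) * ∑ p : ZMod H × ZMod W, (a p - segMean a) ^ 2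

private lemma sum_shift {H W : ℕ} [NeZero H] [NeZero W]
    (a : ZMod H × ZMod W → ℝ) (s : ZMod H × ZMod W) :
    ∑ p : ZMod H × ZMod W, a (p - s) = ∑ p : ZMod H × ZMod W, a p :=
  Fintype.sum_equiv (Equiv.subRight s) _ _ (fun _ => rfl)

private lemma segMean_blur {H W : ℕ} [NeZero H] [NeZero W]
    (g : ZMod H × ZMod W → ℝ) (hg1 : ∑ s : ZMod H × ZMod W, g s = 1)
    (a : ZMod H × ZMod W → ℝ) : segMean (segBlur g a) = segMean a := by
  unfold segMean segBlur
  congr 1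
  rw [Finset.sum_comm]
  calc ∑ s : ZMod H × ZMod W, ∑ p : ZMod H × ZMod W, g s * a (p - s)
      = ∑ s : ZMod H × ZMod W, g s * ∑ p : ZMod H × ZMod W, a p := by
        refine Finset.sum_congr rfl fun s _ => ?_
        rw [← Finset.mul_sum, sum_shift]
    _ = ∑ p : ZMod H × ZMod W, a p := by rw [← Finset.sum_mul, hg1, one_mul]

private lemma segVar_blur_le {H W : ℕ} [NeZero H] [NeZero W]
    (g : ZMod H × ZMod W → ℝ) (hg0 : ∀ s, 0 ≤ g s)
    (hg1 : ∑ s : ZMod H × ZMod W, g s = 1)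
    (a : ZMod H × ZMod W → ℝ) : segVar (segBlur g a) ≤ segVar a := by
  unfold segVar
  rw [segMean_blur g hg1]
  have hc : (0:ℝ) ≤ 1 / ((H : ℝ) * (W : ℝ)) := by positivity
  refine mul_le_mul_of_nonneg_left ?_ hc
  have key : ∀ p : ZMod H × ZMod W,
      (segBlur g a p - segMean a) ^ 2 ≤ ∑ s : ZMod H × ZMod W, g s * (a (p - s) - segMean a) ^ 2 := by
    intro p
    have h1 : segBlur g a p - segMean a = ∑ s : ZMod H × ZMod W, g s * (a (p - s) - segMean a) := by
      unfold segBlur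
      simp only [mul_sub, Finset.sum_sub_distrib, ← Finset.sum_mul, hg1, one_mul]
    rw [h1]
    have := (Even.convexOn_pow (even_two)).map_sum_le
      (t := Finset.univ) (w := g) (p := fun s => a (p - s) - segMean a)
      (fun i _ => hg0 i) hg1 (fun i _ => Set.mem_univ _)
    simpa using this
  calc ∑ p : ZMod H × ZMod W, (segBlur g a p - segMean a) ^ 2
      ≤ ∑ p : ZMod H × ZMod W, ∑ s : ZMod H × ZMod W, g s * (a (p - s) - segMean a) ^ 2 :=
        Finset.sum_le_sum fun p _ => key p
    _ = ∑ s : ZMod H × ZMod W, g s * ∑ p : ZMod H × ZMod W, (a (p - s) - segMean a) ^ 2 := by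
        rw [Finset.sum_comm]
        exact Finset.sum_congr rfl fun s _ => (Finset.mul_sum _ _ _).symm
    _ = ∑ s : ZMod H × ZMod W, g s * ∑ p : ZMod H × ZMod W, (a p - segMean a) ^ 2 := by
        refine Finset.sum_congr rfl fun s _ => ?_
        rw [sum_shift (fun q => (a q - segMean a)^2) s]
    _ = ∑ p : ZMod H × ZMod W, (a p - segMean a) ^ 2 := by
        rw [← Finset.sum_mul, hg1, one_mul]

/-- the variance of the iterated blur is monotonically
nonincreasing in the number of blur applications. -/
theorem segBlur_iterate_variance_antitone {H W : ℕ} [NeZero H] [NeZero W]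
    (g : ZMod H × ZMod W → ℝ) (hg0 : ∀ s, 0 ≤ g s)
    (hg1 : ∑ s : ZMod H × ZMod W, g s = 1)
    (a : ZMod H × ZMod W → ℝ) (k : ℕ) :
    segVar ((segBlur g)^[k + 1] a) ≤ segVar ((segBlur g)^[k] a) := by
  rw [Function.iterate_succ_apply']
  exact segVar_blur_le g hg0 hg1 _
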